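/- Let n, n_c, d ≥ 1 be integers and β a real number with β ≠ −1 and β ≠ 0. Let H ∈ ℝ^{n×n} be diagonal with positive diagonal entries, and for each i ∈ {1,…,d} let E_i ∈ ℝ^{n×n} be diagonal, Q_i ∈ ℝ^{n×n} with Q_i + Q_i^T = E_i, D_i = H^{−1}Q_i, and Ā_i ∈ ℝ^{n·n_c×n·n_c} block diagonal with symmetric n_c×n_c blocks Ā_{i,j}. Let u be a node array of n nodes in ℝ^{n_c}, and w, f^{(i)} ∈ ℝ^{n·n_c}, ψ^{(i)} ∈ ℝ^n be such that for each node j and each i: Ā_{i,j}·w_j = β·f_j^{(i)} and ⟨w_j, f_j^{(i)}⟩ = (β+1)·ψ_j^{(i)}. Let Γ be a finite index set and for each γ ∈ Γ let u^γ be a node array of m_γ nodes in ℝ^{n_c} and E_i^γ ∈ ℝ^{n×m_γ} arbitrary matrices; let f*_i be two-point fluxes. Define the residual r ∈ ℝ^{n·n_c} by r = −(β/(β+1))·Σ_i D̄_i·f^{(i)} − (1/(β+1))·Σ_i Ā_i·D̄_i·w + H̄^{−1}·Σ_i Ē_i·f^{(i)} − ½·H̄^{−1}·Σ_{γ∈Γ}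 Σ_i (Ē_i^γ ∘ F_i(u, u^γ))·1. Then: w^T·H̄·r = Σ_i 1^T·E_i·ψ^{(i)} − ½·Σ_{γ∈Γ} Σ_i w^T·(Ē_i^γ ∘ F_i(u, u^γ))·1. -/
import Mathlib


open Matrix

/-- `M̄ = M ⊗ I_{n_c}`: the Kronecker product of a matrix with the `nc × nc`
identity, indexed by pairs (node, component). -/
def blockMat {n m : ℕ} (nc : ℕ) (M : Matrix (Fin n) (Fin m) ℝ) :
    Matrix (Fin n × Fin nc) (Fin m × Fin nc) ℝ :=
  Matrix.of fun jp lq => M jp.1 lq.1 * (if jp.2 = lq.2 then 1 else 0)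

/-- Concatenation of a node-state array into a vector of `ℝ^{n·n_c}`. -/
def concatVec {n nc : ℕ} (u : Fin n → Fin nc → ℝ) : Fin n × Fin nc → ℝ :=
  fun jp => u jp.1 jp.2

/-- Block diagonal matrix with `nc × nc` diagonal blocks. -/
def blockDiagMat {n nc : ℕ} (Ab : Fin n → Matrix (Fin nc) (Fin nc) ℝ) :
    Matrix (Fin n × Fin nc) (Fin n × Fin nc) ℝ :=
  Matrix.of fun jp lq => if jp.1 = lq.1 then Ab jp.1 jp.2 lq.2 else 0

/-- The block matrix `F(u, v)` whose `(j, l)` block of size `nc × nc` is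
`2·diag(f*(u_j, v_l))`. -/
def fluxMat {n m nc : ℕ} (fstar : (Fin nc → ℝ) → (Fin nc → ℝ) → Fin nc → ℝ)
    (u : Fin n → Fin nc → ℝ) (v : Fin m → Fin nc → ℝ) :
    Matrix (Fin n × Fin nc) (Fin m × Fin nc) ℝ :=
  Matrix.of fun jp lq => if jp.2 = lq.2 then 2 * fstar (u jp.1) (v lq.1) jp.2 else 0

lemma blockMat_mulVec_apply {n m nc : ℕ} (M : Matrix (Fin n) (Fin m) ℝ)
    (v : Fin m × Fin nc → ℝ) (jp : Fin n × Fin nc) :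
    (blockMat nc M *ᵥ v) jp = ∑ l, M jp.1 l * v (l, jp.2) := by
  simp only [mulVec, dotProduct, blockMat, Matrix.of_apply, Fintype.sum_prod_type]
  refine Finset.sum_congr rfl fun l _ => ?_
  rw [Finset.sum_eq_single jp.2] <;> simp (config := {contextual := true}) [eq_comm]

lemma blockDiagMat_mulVec_apply {n nc : ℕ} (Ab : Fin n → Matrix (Fin nc) (Fin nc) ℝ)
    (v : Fin n × Fin nc → ℝ) (jp : Fin n × Fin nc) :
    (blockDiagMat Ab *ᵥ v) jp = ∑ q, Ab jp.1 jp.2 q * v (jp.1, q) := by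
  simp only [mulVec, dotProduct, blockDiagMat, Matrix.of_apply, Fintype.sum_prod_type]
  rw [Finset.sum_eq_single jp.1] <;> simp (config := {contextual := true}) [eq_comm]

lemma blockMat_comp {n m k nc : ℕ} (A : Matrix (Fin n) (Fin m) ℝ)
    (B : Matrix (Fin m) (Fin k) ℝ) (v : Fin k × Fin nc → ℝ) :
    blockMat nc A *ᵥ (blockMat nc B *ᵥ v) = blockMat nc (A * B) *ᵥ v := by
  funext jp
  simp only [blockMat_mulVec_apply, Matrix.mul_apply, Finset.sum_mul, Finset.mul_sum]
  rw [Finset.sum_comm]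
  apply Finset.sum_congr rfl; intro l _
  apply Finset.sum_congr rfl; intro k _
  ring

lemma blockMat_one_mulVec {n nc : ℕ} (v : Fin n × Fin nc → ℝ) :
    blockMat nc (1 : Matrix (Fin n) (Fin n) ℝ) *ᵥ v = v := by
  funext jp
  rw [blockMat_mulVec_apply, Finset.sum_eq_single jp.1] <;>
    simp (config := {contextual := true}) [Matrix.one_apply, eq_comm]

lemma dot_concat {n nc : ℕ} (a : Fin n → Fin nc → ℝ) (x : Fin n × Fin nc → ℝ) :
    concatVec a ⬝ᵥ x = ∑ j, ∑ p, a j p * x (j, p) := by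
  simp [dotProduct, concatVec, Fintype.sum_prod_type]

lemma dot_blockMat {n m nc : ℕ} (a : Fin n → Fin nc → ℝ) (M : Matrix (Fin n) (Fin m) ℝ)
    (b : Fin m → Fin nc → ℝ) :
    concatVec a ⬝ᵥ (blockMat nc M *ᵥ concatVec b) = ∑ j, ∑ l, M j l * (a j ⬝ᵥ b l) := by
  simp only [dot_concat, blockMat_mulVec_apply, dotProduct, concatVec]
  rw [Fintype.sum_prod_type]
  apply Finset.sum_congr rfl; intro j _
  simp only [Finset.mul_sum]
  rw [Finset.sum_comm]
  apply Finset.sum_congr rfl; intro l _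
  apply Finset.sum_congr rfl; intro p _
  ring

lemma mulVec_sum' {α k m : Type*} [Fintype α] [Fintype m] (s : Finset α)
    (A : Matrix k m ℝ) (f : α → m → ℝ) :
    A *ᵥ (∑ i ∈ s, f i) = ∑ i ∈ s, A *ᵥ f i := by
  funext x
  simp [mulVec, dotProduct, Finset.mul_sum]
  rw [Finset.sum_comm]

lemma dot_sum' {α m : Type*} [Fintype α] [Fintype m] (s : Finset α)
    (v : m → ℝ) (f : α → m → ℝ) :
    v ⬝ᵥ (∑ i ∈ s, f i) = ∑ i ∈ s, v ⬝ᵥ f i := by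
  simp [dotProduct, Finset.mul_sum]
  rw [Finset.sum_comm]


/-- **Per-element entropy balance of the entropy-split SBP-SAT discretization.**
With `H` diagonal positive, `E_i` diagonal, `Q_i + Q_iᵀ = E_i`, `D_i = H⁻¹Q_i`,
block diagonal `Ā_i` with symmetric blocks, node relations `Ā_{i,j} w_j = β f_j⁽ⁱ⁾`
and `⟨w_j, f_j⁽ⁱ⁾⟩ = (β+1) ψ_j⁽ⁱ⁾`, and the residual
`r = −(β/(β+1))·Σ_i D̄_i f⁽ⁱ⁾ − (1/(β+1))·Σ_i Ā_i D̄_i w + H̄⁻¹ Σ_i Ē_i f⁽ⁱ⁾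
  − ½ H̄⁻¹ Σ_γ Σ_i (Ē_i^γ ∘ F_i(u, u^γ))·1`, one has
`wᵀ H̄ r = Σ_i 1ᵀ E_i ψ⁽ⁱ⁾ − ½ Σ_γ Σ_i wᵀ (Ē_i^γ ∘ F_i(u, u^γ))·1`. -/
theorem entropy_split_element_entropy_balance
    (n nc dd : ℕ) (hn : 1 ≤ n) (hnc : 1 ≤ nc) (hdd : 1 ≤ dd)
    (β : ℝ) (hβ1 : β ≠ -1) (hβ0 : β ≠ 0)
    (H : Matrix (Fin n) (Fin n) ℝ) (hHdiag : H.IsDiag) (hHpos : ∀ j, 0 < H j j)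
    (E Q : Fin dd → Matrix (Fin n) (Fin n) ℝ)
    (hEdiag : ∀ i, (E i).IsDiag) (hQ : ∀ i, Q i + (Q i)ᵀ = E i)
    (Ab : Fin dd → Fin n → Matrix (Fin nc) (Fin nc) ℝ)
    (hAb : ∀ i j, (Ab i j).IsSymm)
    (un wn : Fin n → Fin nc → ℝ) (fn : Fin dd → Fin n → Fin nc → ℝ)
    (ψ : Fin dd → Fin n → ℝ)
    (hhom : ∀ i j, (Ab i j) *ᵥ wn j = β • fn i j)
    (hpot : ∀ i j, wn j ⬝ᵥ fn i j = (β + 1) * ψ i j)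
    (Γ : Type) [Fintype Γ] (m : Γ → ℕ)
    (uγ : (g : Γ) → Fin (m g) → Fin nc → ℝ)
    (Eγ : (g : Γ) → Fin dd → Matrix (Fin n) (Fin (m g)) ℝ)
    (fstar : Fin dd → (Fin nc → ℝ) → (Fin nc → ℝ) → Fin nc → ℝ)
    (r : Fin n × Fin nc → ℝ)
    (hr : r =
      -((β / (β + 1)) • ∑ i, blockMat nc (H⁻¹ * Q i) *ᵥ concatVec (fn i))
        - (1 / (β + 1)) •
            ∑ i, blockDiagMat (Ab i) *ᵥ (blockMat nc (H⁻¹ * Q i) *ᵥ concatVec wn)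
        + blockMat nc (H⁻¹) *ᵥ ∑ i, blockMat nc (E i) *ᵥ concatVec (fn i)
        - (1 / 2 : ℝ) • (blockMat nc (H⁻¹) *ᵥ ∑ g : Γ, ∑ i,
            ((blockMat nc (Eγ g i)).hadamard (fluxMat (fstar i) un (uγ g)) *ᵥ 1))) :
    concatVec wn ⬝ᵥ (blockMat nc H *ᵥ r)
      = (∑ i, (1 : Fin n → ℝ) ⬝ᵥ (E i *ᵥ ψ i))
        - (1 / 2 : ℝ) * ∑ g : Γ, ∑ i,
            concatVec wn ⬝ᵥ
              ((blockMat nc (Eγ g i)).hadamard (fluxMat (fstar i) un (uγ g)) *ᵥ 1) := by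
  have hβ : β + 1 ≠ 0 := fun h => hβ1 (by linarith)
  -- basic facts about H
  have hHd : H = Matrix.diagonal (fun j => H j j) := by
    ext a b
    by_cases h : a = b
    · subst h; simp
    · simp [Matrix.diagonal_apply_ne _ h, hHdiag h]
  have hHmul : H * H⁻¹ = 1 := by
    apply Matrix.mul_nonsing_inv
    rw [hHd, Matrix.det_diagonal]
    exact isUnit_iff_ne_zero.mpr (ne_of_gt (Finset.prod_pos fun j _ => hHpos j))
  have hHMul_apply : ∀ (M : Matrix (Fin n) (Fin n) ℝ) (j l : Fin n),
      (H * M) j l = H j j * M j l := by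
    intro M j l
    rw [Matrix.mul_apply,
      Finset.sum_eq_single j (fun b _ hb => by rw [hHdiag (Ne.symm hb), zero_mul])
        (fun h => absurd (Finset.mem_univ j) h)]
  have hQi : ∀ i, H * (H⁻¹ * Q i) = Q i := by
    intro i; rw [← mul_assoc, hHmul, one_mul]
  have hEi : ∀ i, H * (H⁻¹ * E i) = E i := by
    intro i; rw [← mul_assoc, hHmul, one_mul]
  have hentry : ∀ i (j l : Fin n), H j j * (H⁻¹ * Q i) j l = Q i j l := by
    intro i j l; rw [← hHMul_apply, hQi i]
  have hHapp : ∀ (y : Fin n × Fin nc → ℝ) (jp : Fin n × Fin nc),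
      (blockMat nc H *ᵥ y) jp = H jp.1 jp.1 * y jp := by
    intro y jp
    rw [blockMat_mulVec_apply,
      Finset.sum_eq_single jp.1 (fun b _ hb => by rw [hHdiag (Ne.symm hb), zero_mul])
        (fun h => absurd (Finset.mem_univ jp.1) h)]
  -- the B-term computation
  have hB : ∀ i, concatVec wn ⬝ᵥ (blockMat nc H *ᵥ
        (blockDiagMat (Ab i) *ᵥ (blockMat nc (H⁻¹ * Q i) *ᵥ concatVec wn)))
      = β * ∑ j, ∑ l, Q i j l * (fn i j ⬝ᵥ wn l) := by
    intro i
    rw [dot_concat, Finset.mul_sum]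
    apply Finset.sum_congr rfl; intro j _
    simp only [hHapp, blockDiagMat_mulVec_apply, blockMat_mulVec_apply, concatVec]
    have hA : ∀ q, ∑ p, wn j p * Ab i j p q = β * fn i j q := by
      intro q
      have h1 := congrFun (hhom i j) q
      simp only [mulVec, dotProduct, Pi.smul_apply, smul_eq_mul] at h1
      rw [← h1]
      apply Finset.sum_congr rfl; intro p _
      rw [(hAb i j).apply p q]; ring
    calc ∑ p, wn j p * (H j j * ∑ q, Ab i j p q * ∑ l, (H⁻¹ * Q i) j l * wn l q)
        = ∑ q, (∑ p, wn j p * Ab i j p q) * (H j j * ∑ l, (H⁻¹ * Q i) j l * wn l q) := by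
          simp only [Finset.mul_sum, Finset.sum_mul]
          rw [Finset.sum_comm]
          apply Finset.sum_congr rfl; intro q _
          rw [Finset.sum_comm]
          apply Finset.sum_congr rfl; intro l _
          apply Finset.sum_congr rfl; intro p _
          ring
      _ = ∑ q, (β * fn i j q) * (H j j * ∑ l, (H⁻¹ * Q i) j l * wn l q) := by
          apply Finset.sum_congr rfl; intro q _
          rw [hA q]
      _ = β * ∑ l, Q i j l * (fn i j ⬝ᵥ wn l) := by
          simp only [dotProduct, Finset.mul_sum, Finset.sum_mul]
          rw [Finset.sum_comm]
          apply Finset.sum_congr rfl; intro l _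
          apply Finset.sum_congr rfl; intro q _
          rw [← hentry i j l]
          ring
  -- expand the residual
  subst hr
  simp only [Matrix.mulVec_add, Matrix.mulVec_sub, Matrix.mulVec_neg, Matrix.mulVec_smul,
    mulVec_sum', blockMat_comp, hHmul, blockMat_one_mulVec, Matrix.one_mul, hQi,
    dotProduct_add, dotProduct_sub, dotProduct_neg, dotProduct_smul, dot_sum', hEi,
    smul_eq_mul]
  rw [sub_left_inj]
  -- now the inviscid part
  have key : ∀ i, -(β / (β + 1) * (concatVec wn ⬝ᵥ (blockMat nc (Q i) *ᵥ concatVec (fn i))))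
      - 1 / (β + 1) * (concatVec wn ⬝ᵥ (blockMat nc H *ᵥ
          (blockDiagMat (Ab i) *ᵥ (blockMat nc (H⁻¹ * Q i) *ᵥ concatVec wn))))
      + concatVec wn ⬝ᵥ (blockMat nc (E i) *ᵥ concatVec (fn i))
      = (1 : Fin n → ℝ) ⬝ᵥ (E i *ᵥ ψ i) := by
    intro i
    rw [hB i, dot_blockMat, dot_blockMat]
    have hEψ : (1 : Fin n → ℝ) ⬝ᵥ (E i *ᵥ ψ i) = ∑ j, E i j j * ψ i j := by
      simp only [dotProduct, mulVec, one_mul, Pi.one_apply]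
      apply Finset.sum_congr rfl; intro j _
      rw [Finset.sum_eq_single j (fun b _ hb => by rw [hEdiag i (Ne.symm hb), zero_mul])
        (fun h => absurd (Finset.mem_univ j) h)]
    rw [hEψ]
    -- E-diagonal collapse for the third term
    have hC : ∑ j, ∑ l, E i j l * (wn j ⬝ᵥ fn i l) = ∑ j, (β + 1) * (E i j j * ψ i j) := by
      apply Finset.sum_congr rfl; intro j _
      rw [Finset.sum_eq_single j (fun b _ hb => by rw [hEdiag i (Ne.symm hb), zero_mul])
        (fun h => absurd (Finset.mem_univ j) h), hpot]
      ring
    rw [hC]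
    -- reindex the B-sum
    have hBswap : ∑ j, ∑ l, Q i j l * (fn i j ⬝ᵥ wn l)
        = ∑ j, ∑ l, (Q i)ᵀ j l * (wn j ⬝ᵥ fn i l) := by
      rw [Finset.sum_comm]
      apply Finset.sum_congr rfl; intro j _
      apply Finset.sum_congr rfl; intro l _
      rw [Matrix.transpose_apply, dotProduct_comm]
    rw [hBswap]
    have hcomb : -(β / (β + 1) * ∑ j, ∑ l, Q i j l * (wn j ⬝ᵥ fn i l))
        - 1 / (β + 1) * (β * ∑ j, ∑ l, (Q i)ᵀ j l * (wn j ⬝ᵥ fn i l))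
        = -(β / (β + 1)) * ∑ j, ∑ l, E i j l * (wn j ⬝ᵥ fn i l) := by
      rw [← hQ i]
      simp only [Matrix.add_apply, Finset.mul_sum, ← Finset.sum_add_distrib,
        ← Finset.sum_neg_distrib, ← Finset.sum_sub_distrib]
      apply Finset.sum_congr rfl; intro j _
      apply Finset.sum_congr rfl; intro l _
      ring
    rw [hcomb, hC, ← Finset.mul_sum]
    field_simp
    ring
  simp only [Finset.mul_sum, ← Finset.sum_neg_distrib, ← Finset.sum_sub_distrib,
    ← Finset.sum_add_distrib]
  exact Finset.sum_congr rfl fun i _ => key i
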